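/- With J(f) = ∫ f·(c₀ p₀ − c₁ p₁) dμ over measurable f : X → [0,1] and f* = 𝟙_{C*} with C* = {c₀ p₀ ≤ c₁ p₁}, the variational inequality holds: for every measurable f : X → [0,1], ∫ (f − f*)(c₀ p₀ − c₁ p₁) dμ ≥ 0. -/
import Mathlib

open MeasureTheory

theorem variational_inequality
    {X : Type*} [MeasurableSpace X] (μ : Measure X)
    (p₀ p₁ : X → ℝ) (hp₀m : Measurable p₀) (hp₁m : Measurable p₁)
    (hp₀ : ∀ x, 0 ≤ p₀ x) (hp₁ : ∀ x, 0 ≤ p₁ x)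
    (hp₀i : Integrable p₀ μ) (hp₁i : Integrable p₁ μ)
    (c₀ c₁ : ℝ) (hc₀ : 0 < c₀) (hc₁ : 0 < c₁)
    (f : X → ℝ) (hf : Measurable f) (hf01 : ∀ x, f x ∈ Set.Icc (0:ℝ) 1) :
    0 ≤ ∫ x, (f x - Set.indicator {x | c₀ * p₀ x ≤ c₁ * p₁ x} (fun _ => (1:ℝ)) x)
          * (c₀ * p₀ x - c₁ * p₁ x) ∂μ := by
  apply integral_nonneg
  intro x
  obtain ⟨h0, h1⟩ := hf01 x
  simp only [Set.indicator_apply, Set.mem_setOf_eq, Pi.zero_apply]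
  by_cases h : c₀ * p₀ x ≤ c₁ * p₁ x
  · rw [if_pos h]
    nlinarith
  · rw [if_neg h]
    exact mul_nonneg (by linarith) (by linarith [lt_of_not_ge h])
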